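/- On a closed surface (no boundary) of genus g, the space of harmonic fields ker(curl*) ∩ ker(div) in a discrete Hodge decomposition has dimension equal to 2g; in particular, on a simplicial sphere every piecewise constant vector field is the orthogonal sum of a gradient field and a co-gradient field. -/
import Mathlib


open RealInnerProductSpace

lemma ker_adjoint_eq' {E F : Type*} [NormedAddCommGroup E] [InnerProductSpace ℝ E]
    [FiniteDimensional ℝ E] [NormedAddCommGroup F] [InnerProductSpace ℝ F]
    [FiniteDimensional ℝ F] (A : E →ₗ[ℝ] F) :
    LinearMap.ker (LinearMap.adjoint A) = (LinearMap.range A)ᗮ := by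
  ext x
  simp only [LinearMap.mem_ker, Submodule.mem_orthogonal]
  constructor
  · rintro h u ⟨y, rfl⟩
    rw [← LinearMap.adjoint_inner_right, h, inner_zero_right]
  · intro h
    rw [← inner_self_eq_zero (𝕜 := ℝ), LinearMap.adjoint_inner_left]
    rw [real_inner_comm]; exact h _ ⟨_, rfl⟩

lemma orthogonal_sup' {E : Type*} [NormedAddCommGroup E] [InnerProductSpace ℝ E]
    (K L : Submodule ℝ E) : (K ⊔ L)ᗮ = Kᗮ ⊓ Lᗮ := by
  ext x
  simp only [Submodule.mem_orthogonal, Submodule.mem_inf]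
  constructor
  · intro h
    exact ⟨fun u hu => h u (Submodule.mem_sup_left hu),
           fun u hu => h u (Submodule.mem_sup_right hu)⟩
  · rintro ⟨h1, h2⟩ u hu
    obtain ⟨a, ha, b, hb, rfl⟩ := Submodule.mem_sup.mp hu
    rw [inner_add_left, h1 a ha, h2 b hb, add_zero]

theorem stmt10 (g : ℕ) {C0 C1 C2 : Type*}
    [NormedAddCommGroup C0] [InnerProductSpace ℝ C0] [FiniteDimensional ℝ C0]
    [NormedAddCommGroup C1] [InnerProductSpace ℝ C1] [FiniteDimensional ℝ C1]
    [NormedAddCommGroup C2] [InnerProductSpace ℝ C2] [FiniteDimensional ℝ C2]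
    (d0 : C0 →ₗ[ℝ] C1) (d1 : C1 →ₗ[ℝ] C2) (hdd : ∀ x, d1 (d0 x) = 0)
    (hH1 : Module.finrank ℝ
      (↥(LinearMap.ker d1) ⧸ (LinearMap.range d0).comap (LinearMap.ker d1).subtype)
        = 2 * g) :
    Module.finrank ℝ
      (LinearMap.ker d1 ⊓ LinearMap.ker (LinearMap.adjoint d0) : Submodule ℝ C1) = 2 * g ∧
    (∀ x ∈ LinearMap.range d0, ∀ y ∈ LinearMap.range (LinearMap.adjoint d1), ⟪x, y⟫ = 0) ∧
    (g = 0 → LinearMap.range d0 ⊔ LinearMap.range (LinearMap.adjoint d1) = ⊤) := by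
  have hle : LinearMap.range d0 ≤ LinearMap.ker d1 := by
    rintro _ ⟨x, rfl⟩; exact hdd x
  -- dimension of harmonic space
  have hdim1 : Module.finrank ℝ (LinearMap.range d0) +
      Module.finrank ℝ ((LinearMap.range d0)ᗮ ⊓ LinearMap.ker d1 : Submodule ℝ C1) =
      Module.finrank ℝ (LinearMap.ker d1) :=
    Submodule.finrank_add_inf_finrank_orthogonal hle
  have hcomap : Module.finrank ℝ
      ((LinearMap.range d0).comap (LinearMap.ker d1).subtype) =
      Module.finrank ℝ (LinearMap.range d0) :=
    (Submodule.comapSubtypeEquivOfLe hle).finrank_eq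
  have hquot : Module.finrank ℝ
      (↥(LinearMap.ker d1) ⧸ (LinearMap.range d0).comap (LinearMap.ker d1).subtype) +
      Module.finrank ℝ
      ((LinearMap.range d0).comap (LinearMap.ker d1).subtype) =
      Module.finrank ℝ (LinearMap.ker d1) :=
    Submodule.finrank_quotient_add_finrank _
  have key : Module.finrank ℝ
      (LinearMap.ker d1 ⊓ LinearMap.ker (LinearMap.adjoint d0) : Submodule ℝ C1) = 2 * g := by
    rw [ker_adjoint_eq', inf_comm]
    omega
  refine ⟨key, ?_, ?_⟩
  · rintro _ ⟨a, rfl⟩ _ ⟨b, rfl⟩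
    rw [LinearMap.adjoint_inner_right, hdd, inner_zero_left]
  · intro hg
    subst hg
    rw [← Submodule.orthogonal_eq_bot_iff, orthogonal_sup', ← ker_adjoint_eq',
      ← ker_adjoint_eq' (LinearMap.adjoint d1), LinearMap.adjoint_adjoint]
    apply Submodule.finrank_eq_zero.mp
    rw [inf_comm]
    simpa using key
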